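/- (Theorem 1, conclusion 2, EPS law) Fix d ≥ 1, T > 0, μ : Fin d → ℝ, σx ≥ 0, ε : Fin d → ℝ, and measurable schedules γ, σ : ℝ → ℝ with v t := (γ t)²σx² + (σ t)² > 0 for t ∈ [0,T], and with t ↦ γ t / v t, t ↦ σ t / v t and t ↦ 1 / v t integrable on [0,T]. Let Y₀ and Z be independent with laws Measure.pi (fun i => gaussianReal (μ i) (σx²)) and Measure.pi (fun i => gaussianReal 0 1). Define the adversarial EPS Ŝ = (1/T)·∫₀^T (fun i => −(γ t * Y₀ i + σ t * Z i + ε i − γ t * μ i)/(v t)) dt. Then the law of Ŝ is Measure.pi (fun i => gaussianReal (−c · ε i) (a²σx² + b²)), where a = (1/T)∫₀^T γ t / (v t) dt, b = (1/T)∫₀^T σ t / (v t) dt, and c = (1/T)∫₀^T 1/(v t) dt; in particular the EPS of the adversarial sample is Gaussian with mean −μ_S where μ_S = E_{t∼U(0,T)}[ε/(γ_t²σx² + σ_t²)] = c•ε. -/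

import Mathlib

open MeasureTheory ProbabilityTheory
open scoped NNReal

/-!
Integrating in time first, the averaged score is an affine function of the pair `(Y₀, Z)`,
acting coordinate by coordinate with the same coefficients `-a`, `-b` for every coordinate.
Since both laws are products over the coordinates, the law of the score is the product of the
laws of `-a Y₀ᵢ - b Zᵢ + (a μᵢ - c εᵢ)`, and each of these is Gaussian because the
convolution of two Gaussians is Gaussian.
-/

lemma IntervalIntegrable.smul_const {E : Type*} [NormedAddCommGroup E] [NormedSpace ℝ E]
    {f : ℝ → ℝ} {μ : Measure ℝ} {a b : ℝ} (hf : IntervalIntegrable f μ a b) (c : E) :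
    IntervalIntegrable (fun t => f t • c) μ a b :=
  ⟨hf.1.smul_const c, hf.2.smul_const c⟩

lemma ProbabilityTheory.gaussianReal_prod_map_affine (m₁ m₂ : ℝ) (v₁ v₂ : ℝ≥0)
    (α β κ : ℝ) :
    ((gaussianReal m₁ v₁).prod (gaussianReal m₂ v₂)).map (fun q => α * q.1 + β * q.2 + κ)
      = gaussianReal (α * m₁ + β * m₂ + κ)
          (.mk (α ^ 2) (sq_nonneg _) * v₁ + .mk (β ^ 2) (sq_nonneg _) * v₂) := by
  have hdecomp : (fun q : ℝ × ℝ => α * q.1 + β * q.2 + κ)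
      = (· + κ) ∘ (fun q : ℝ × ℝ => q.1 + q.2) ∘ Prod.map (α * ·) (β * ·) := rfl
  rw [hdecomp, ← Measure.map_map (by fun_prop) (by fun_prop),
    ← Measure.map_map (by fun_prop) (by fun_prop),
    ← Measure.map_prod_map _ _ (by fun_prop) (by fun_prop), gaussianReal_map_const_mul,
    gaussianReal_map_const_mul, ← Measure.conv, gaussianReal_conv_gaussianReal,
    gaussianReal_map_add_const]

lemma MeasureTheory.Measure.map_prod_pi_pi {ι α β γ : Type*} [Fintype ι] [MeasurableSpace α]
    [MeasurableSpace β] [MeasurableSpace γ] (μ : ι → Measure α) (ν : ι → Measure β)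
    [∀ i, IsFiniteMeasure (μ i)] [∀ i, IsFiniteMeasure (ν i)] {f : ι → α × β → γ}
    (hf : ∀ i, Measurable (f i)) :
    ((Measure.pi μ).prod (Measure.pi ν)).map (fun p i => f i (p.1 i, p.2 i))
      = Measure.pi fun i => ((μ i).prod (ν i)).map (f i) := by
  have hpair := measurePreserving_arrowProdEquivProdArrow α β ι μ ν
  rw [← hpair.map_eq, Measure.map_map (by fun_prop) hpair.measurable]
  exact Measure.pi_map_pi fun i => (hf i).aemeasurable
lemma intervalIntegral_adversarialScore {ι : Type*} [Fintype ι] {T : ℝ} {γ σ v : ℝ → ℝ}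
    (hγv : IntervalIntegrable (fun t => γ t / v t) volume 0 T)
    (hσv : IntervalIntegrable (fun t => σ t / v t) volume 0 T)
    (hinv : IntervalIntegrable (fun t => 1 / v t) volume 0 T) (μ ε y z : ι → ℝ) :
    ∫ t in (0 : ℝ)..T, (fun i => -(γ t * y i + σ t * z i + ε i - γ t * μ i) / v t)
      = (∫ t in (0 : ℝ)..T, γ t / v t) • (μ - y)
          + (∫ t in (0 : ℝ)..T, σ t / v t) • (-z)
          + (∫ t in (0 : ℝ)..T, 1 / v t) • (-ε) := by
  have hsplit : (fun t => (fun i => -(γ t * y i + σ t * z i + ε i - γ t * μ i) / v t))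
      = fun t => (γ t / v t) • (μ - y) + (σ t / v t) • (-z) + (1 / v t) • (-ε) := by
    ext t i
    simp only [Pi.add_apply, Pi.smul_apply, Pi.sub_apply, Pi.neg_apply, smul_eq_mul]
    ring
  rw [hsplit, intervalIntegral.integral_add ((hγv.smul_const _).add (hσv.smul_const _))
      (hinv.smul_const _), intervalIntegral.integral_add (hγv.smul_const _) (hσv.smul_const _)]
  simp only [intervalIntegral.integral_smul_const]

theorem eps_adversarial_law_general (d : ℕ) (T : ℝ) (μ : Fin d → ℝ)
    (σx : ℝ) (ε : Fin d → ℝ) (γ σ : ℝ → ℝ) (v : ℝ → ℝ)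
    (hint1 : IntervalIntegrable (fun t => γ t / v t) volume 0 T)
    (hint2 : IntervalIntegrable (fun t => σ t / v t) volume 0 T)
    (hint3 : IntervalIntegrable (fun t => 1 / v t) volume 0 T) :
    Measure.map
      (fun p : (Fin d → ℝ) × (Fin d → ℝ) =>
        (1 / T) • ∫ t in (0 : ℝ)..T,
          (fun i => -(γ t * p.1 i + σ t * p.2 i + ε i - γ t * μ i) / v t))
      ((Measure.pi fun i => gaussianReal (μ i) ((σx ^ 2).toNNReal)).prod
        (Measure.pi fun _ => gaussianReal 0 1))
    = Measure.pi fun i => gaussianReal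
        (-(((1 / T) * ∫ t in (0 : ℝ)..T, 1 / v t) * ε i))
        ((((1 / T) * ∫ t in (0 : ℝ)..T, γ t / v t) ^ 2 * σx ^ 2
          + ((1 / T) * ∫ t in (0 : ℝ)..T, σ t / v t) ^ 2).toNNReal) := by
  set a := (1 / T) * ∫ t in (0 : ℝ)..T, γ t / v t
  set b := (1 / T) * ∫ t in (0 : ℝ)..T, σ t / v t
  set c := (1 / T) * ∫ t in (0 : ℝ)..T, 1 / v t
  have haffine : (fun p : (Fin d → ℝ) × (Fin d → ℝ) =>
      (1 / T) • ∫ t in (0 : ℝ)..T,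
        (fun i => -(γ t * p.1 i + σ t * p.2 i + ε i - γ t * μ i) / v t))
      = fun p i => -a * p.1 i + -b * p.2 i + (a * μ i - c * ε i) := by
    ext p i
    rw [intervalIntegral_adversarialScore hint1 hint2 hint3]
    simp only [Pi.smul_apply, Pi.add_apply, Pi.sub_apply, Pi.neg_apply, smul_eq_mul, a, b, c]
    ring
  rw [haffine, Measure.map_prod_pi_pi
    (f := fun i q => -a * q.1 + -b * q.2 + (a * μ i - c * ε i)) _ _ fun i => by fun_prop]
  congr! with i
  rw [gaussianReal_prod_map_affine]
  congr 1
  · ring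
  · have hvar : 0 ≤ a ^ 2 * σx ^ 2 + b ^ 2 := by positivity
    ext
    simp only [NNReal.coe_add, NNReal.coe_mul, NNReal.coe_mk, NNReal.coe_one,
      Real.coe_toNNReal _ (sq_nonneg σx), Real.coe_toNNReal _ hvar]
    ring

/-- Theorem 1, conclusion 2, EPS law: the adversarial expected perturbation score
`Ŝ = (1/T)·∫₀ᵀ (fun i => −(γ t·Y₀ i + σ t·Z i + ε i − γ t·μ i)/(v t)) dt` is Gaussian
with mean `−c•ε` and per-coordinate variance `a²σx² + b²`, where
`a = (1/T)∫₀ᵀ γ t/(v t) dt`, `b = (1/T)∫₀ᵀ σ t/(v t) dt`, `c = (1/T)∫₀ᵀ 1/(v t) dt`. -/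
theorem eps_adversarial_law (d : ℕ) (hd : 1 ≤ d) (T : ℝ) (hT : 0 < T) (μ : Fin d → ℝ)
    (σx : ℝ) (hσx : 0 ≤ σx) (ε : Fin d → ℝ) (γ σ : ℝ → ℝ) (hγ : Measurable γ)
    (hσ : Measurable σ) (v : ℝ → ℝ) (hv : ∀ t, v t = (γ t) ^ 2 * σx ^ 2 + (σ t) ^ 2)
    (hvpos : ∀ t ∈ Set.Icc (0 : ℝ) T, 0 < v t)
    (hint1 : IntervalIntegrable (fun t => γ t / v t) volume 0 T)
    (hint2 : IntervalIntegrable (fun t => σ t / v t) volume 0 T)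
    (hint3 : IntervalIntegrable (fun t => 1 / v t) volume 0 T) :
    Measure.map
      (fun p : (Fin d → ℝ) × (Fin d → ℝ) =>
        (1 / T) • ∫ t in (0 : ℝ)..T,
          (fun i => -(γ t * p.1 i + σ t * p.2 i + ε i - γ t * μ i) / v t))
      ((Measure.pi fun i => gaussianReal (μ i) ((σx ^ 2).toNNReal)).prod
        (Measure.pi fun _ => gaussianReal 0 1))
    = Measure.pi fun i => gaussianReal
        (-(((1 / T) * ∫ t in (0 : ℝ)..T, 1 / v t) * ε i))
        ((((1 / T) * ∫ t in (0 : ℝ)..T, γ t / v t) ^ 2 * σx ^ 2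
          + ((1 / T) * ∫ t in (0 : ℝ)..T, σ t / v t) ^ 2).toNNReal) :=
  eps_adversarial_law_general d T μ σx ε γ σ v hint1 hint2 hint3
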